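/- Consider a simplified general KCM on L = {1,…,|L|} with range R, sub-volumes L₁ = {1,…,ℓ} and L₂ = {ℓ−Δ+1,…,|L|} with Δ ∈ [0,ℓ], and the middle block M = {ℓ−⌊Δ/2⌋−R,…,ℓ−⌊Δ/2⌋+R} ⊆ L₁∩L₂. Let η ∈ S_L with {η}_L = L. Let θ ∈ S_L satisfy θ_{L∖L₁} = η_{L∖L₁} and θ_{L₁} in the same irreducible component as η_{L₁} for the KCM on volume L₁ with boundary condition η_{L∖L₁}, and suppose there exists a block B = {x−R,…,x+R} ⊆ L₁∩L₂ with x+R < min M such that every site of B ∩ {θ}_{L₁}^{θ_{L∖L₁}} is infected in θ. Let θ′ ∈ S_L satisfy θ′_{L∖L₂} = θ_{L∖L₂} and θ′_{L₂} in the same irreducible component as θ_{L₂} for the KCM on volume L₂ with boundary condition θ_{L∖L₂}, and suppose there exists a block B′ = {x′−R,…,x′+R} ⊆ L₁∩L₂ with x′−R > max M such that every site of B′ ∩ {θ′}_{L₂}^{θ′_{L∖L₂}} is infected in θ′. Then |M ∩ {θ′}_{L₁}^{θ′_{L∖L₁}}| ≥ min( |M ∩ {η}_{L₁}^{η_{L∖L₁}}|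 + 1, 2R+1 ). -/

import Mathlib

open scoped Classical

namespace KCM

/-- A full configuration assigns a state to every site of `ℤ`.  The boundary
condition is the restriction of a configuration outside the volume. -/
abbrev Config (S : ℤ → Type) : Type := ∀ x : ℤ, S x

variable {S : ℤ → Type}

/-- The constraint at site `x` is satisfied in configuration `η`: some update
rule of `x` has all its sites infected. -/
def Constraint (I : ∀ x : ℤ, Set (S x)) (U : ℤ → Finset (Finset ℤ)) (x : ℤ)
    (η : Config S) : Prop :=
  ∃ u ∈ U x, ∀ y ∈ u, η y ∈ I y

/-- A legal transition of the KCM on volume `L`: the two configurations agree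
off a single site `x ∈ L` whose constraint is satisfied. -/
def Step (I : ∀ x : ℤ, Set (S x)) (U : ℤ → Finset (Finset ℤ)) (L : Finset ℤ)
    (η η' : Config S) : Prop :=
  ∃ x ∈ L, Constraint I U x η ∧ ∀ y : ℤ, y ≠ x → η' y = η y

/-- `η` and `η'` belong to the same irreducible component of the KCM on volume
`L` (connected component of the transition graph on configurations). -/
def Reach (I : ∀ x : ℤ, Set (S x)) (U : ℤ → Finset (Finset ℤ)) (L : Finset ℤ)
    (η η' : Config S) : Prop :=
  Relation.ReflTransGen (fun ζ ζ' => Step I U L ζ ζ' ∨ Step I U L ζ' ζ) η η'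

/-- The closure `{η}_L^ω`: the set of sites of `L` whose state can eventually
be updated starting from `η`. -/
def closure (I : ∀ x : ℤ, Set (S x)) (U : ℤ → Finset (Finset ℤ)) (L : Finset ℤ)
    (η : Config S) : Set ℤ :=
  {x | x ∈ L ∧ ∃ η', Reach I U L η η' ∧ Constraint I U x η'}

/-- Replace the states of `η` inside `Λ` by `ξ`. -/
def glue (Λ : Finset ℤ) (η : Config S) (ξ : ∀ x : {y : ℤ // y ∈ Λ}, S x.1) :
    Config S :=
  fun x => if h : x ∈ Λ then ξ ⟨x, h⟩ else η x

variable [∀ x, Fintype (S x)]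

/-- Expectation of `f` when the states of `η` inside `Λ` are resampled from the
product of the measures `π x`, `x ∈ Λ`, conditioned on the event `P`. -/
noncomputable def expOn (π : ∀ x : ℤ, S x → ℝ) (Λ : Finset ℤ)
    (P : Config S → Prop) (η : Config S) (f : Config S → ℝ) : ℝ :=
  (∑ ξ : ∀ x : {y : ℤ // y ∈ Λ}, S x.1,
      if P (glue Λ η ξ) then (∏ x : {y : ℤ // y ∈ Λ}, π x.1 (ξ x)) * f (glue Λ η ξ) else 0) /
  (∑ ξ : ∀ x : {y : ℤ // y ∈ Λ}, S x.1,
      if P (glue Λ η ξ) then (∏ x : {y : ℤ // y ∈ Λ}, π x.1 (ξ x)) else 0)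

/-- Variance of `f` when the states of `η` inside `Λ` are resampled from the
product of the measures `π x`, `x ∈ Λ`, conditioned on the event `P`. -/
noncomputable def varOn (π : ∀ x : ℤ, S x → ℝ) (Λ : Finset ℤ)
    (P : Config S → Prop) (η : Config S) (f : Config S → ℝ) : ℝ :=
  expOn π Λ P η (fun ζ => (f ζ - expOn π Λ P η f) ^ 2)


end KCM

/-!
Closures are traded for bootstrap percolation: the closure of `η` in `Λ` consists of the sites
of `Λ` having an update rule inside the bootstrap span (grown inside `Λ`) of the infected sites
of `η`, and this span does not change along the dynamics. As rules have range `R`, a block of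
`2R + 1` sites whose closure sites are infected is a wall: the span on one side of it is the
same in every volume containing that side. The block `B` left of `M` moves the `L₁`-closure on
`M` into the `L₂`-closure, and `B'` moves the `L₂`-closure back, so the closure on `M` can only
grow. If it does not grow, `M` shields the part left of it from the moves made in `L₂`; then
`B` and `B'` together confine the span of `θ'` in the full volume, which covers `L` since
`{θ'}_L = {η}_L = L`, and every site of `M` ends up in the `L₁`-closure of `θ'`.
-/

theorem Set.nonempty_of_le_sum_ite {α : Type*} [Fintype α] {s : Set α} {p : α → ℝ} {q : ℝ}
    (hq : 0 < q) (h : q ≤ ∑ a, if a ∈ s then p a else 0) : s.Nonempty := by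
  by_contra hs
  simp only [Set.not_nonempty_iff_eq_empty.1 hs, Set.mem_empty_iff_false, if_false,
    Finset.sum_const_zero] at h
  linarith

theorem Finset.min_card_add_one_le_card {α : Type*} {s t u : Finset α} (hst : s ⊆ t)
    (h : t ⊆ s → u ⊆ t) : min (s.card + 1) u.card ≤ t.card := by
  by_cases hts : t ⊆ s
  · exact (min_le_right _ _).trans (card_le_card (h hts))
  · exact (min_le_left _ _).trans (card_lt_card ⟨hst, hts⟩)

theorem Finset.bounds_of_Icc_subset_Icc_inter_Icc {α : Type*} [Preorder α]
    [LocallyFiniteOrder α] [DecidableEq α] {a b c d e f : α}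
    (h : Finset.Icc a b ⊆ Finset.Icc c d ∩ Finset.Icc e f) (hab : a ≤ b) : c ≤ a ∧ b ≤ d ∧ e ≤ a ∧ b ≤ f := by
  rw [Finset.subset_inter_iff, Finset.Icc_subset_Icc_iff hab, Finset.Icc_subset_Icc_iff hab] at h
  exact ⟨h.1.1, h.1.2, h.2.1, h.2.2⟩

namespace KCM

section Dynamics

variable {S : ℤ → Type} {I : ∀ x : ℤ, Set (S x)} {U : ℤ → Finset (Finset ℤ)}
  {Λ Λ' : Finset ℤ} {η η' : Config S}

theorem Step.mono (hΛ : Λ ⊆ Λ') (h : Step I U Λ η η') : Step I U Λ' η η' :=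
  let ⟨x, hx, hc, heq⟩ := h
  ⟨x, hΛ hx, hc, heq⟩

theorem Step.symm (hU : ∀ x ∈ Λ, ∀ u ∈ U x, x ∉ u) (h : Step I U Λ η η') :
    Step I U Λ η' η := by
  obtain ⟨x, hx, ⟨u, hu, hinf⟩, heq⟩ := h
  refine ⟨x, hx, ⟨u, hu, fun y hy => ?_⟩, fun y hy => (heq y hy).symm⟩
  rw [heq y (ne_of_mem_of_not_mem hy (hU x hx u hu))]
  exact hinf y hy

theorem Reach.symm (h : Reach I U Λ η η') : Reach I U Λ η' η :=
  Relation.ReflTransGen.mono (fun _ _ => Or.symm) _ _ (Relation.ReflTransGen.swap _ _ h)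

theorem Reach.mono (hΛ : Λ ⊆ Λ') (h : Reach I U Λ η η') : Reach I U Λ' η η' :=
  Relation.ReflTransGen.mono (fun _ _ => Or.imp (Step.mono hΛ) (Step.mono hΛ)) _ _ h

theorem closure_eq_of_reach (h : Reach I U Λ η η') : closure I U Λ η = closure I U Λ η' := by
  ext z
  refine and_congr_right fun _ => ⟨?_, ?_⟩
  · rintro ⟨ζ, hr, hc⟩
    exact ⟨ζ, h.symm.trans hr, hc⟩
  · rintro ⟨ζ, hr, hc⟩
    exact ⟨ζ, h.trans hr, hc⟩

end Dynamics

inductive Bootstrap {S : ℤ → Type} (I : ∀ x : ℤ, Set (S x)) (U : ℤ → Finset (Finset ℤ))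
    (Λ : Finset ℤ) (η : Config S) : ℤ → Prop
  | base {y : ℤ} : η y ∈ I y → Bootstrap I U Λ η y
  | step {y : ℤ} : y ∈ Λ → ∀ u ∈ U y, (∀ z ∈ u, Bootstrap I U Λ η z) → Bootstrap I U Λ η y

section Bootstrap

variable {S : ℤ → Type} {I : ∀ x : ℤ, Set (S x)} {U : ℤ → Finset (Finset ℤ)}
  {Λ Λ' : Finset ℤ} {η η' : Config S}

theorem Bootstrap.of_step (hU : ∀ x ∈ Λ, ∀ u ∈ U x, x ∉ u) (hs : Step I U Λ η η') {y : ℤ}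
    (h : Bootstrap I U Λ η y) : Bootstrap I U Λ η' y := by
  obtain ⟨x, hx, ⟨u, hu, hinf⟩, heq⟩ := hs.symm hU
  induction h with
  | @base y hy =>
    by_cases hyx : y = x
    · subst hyx
      exact .step hx u hu fun z hz => .base (hinf z hz)
    · exact .base (heq y hyx ▸ hy)
  | step hy u hu _ ih => exact .step hy u hu ih

theorem bootstrap_eq_of_reach (hU : ∀ x ∈ Λ, ∀ u ∈ U x, x ∉ u) (h : Reach I U Λ η η') :
    Bootstrap I U Λ η = Bootstrap I U Λ η' := by
  have of_step {ζ ζ' : Config S} (hs : Step I U Λ ζ ζ') :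
      Bootstrap I U Λ ζ = Bootstrap I U Λ ζ' :=
    funext fun _ => propext ⟨Bootstrap.of_step hU hs, Bootstrap.of_step hU (hs.symm hU)⟩
  induction h with
  | refl => rfl
  | tail _ hs ih => exact ih.trans (hs.elim of_step fun hs => (of_step hs).symm)

/-- Choosing, among the configurations reachable from `η` that keep the infections of `η`, one
with the fewest healthy sites in `Λ`, its infected set is closed under the bootstrap rules. -/
theorem exists_reach_infected_of_bootstrap (hI : ∀ y, (I y).Nonempty) (η : Config S) :
    ∃ η', Reach I U Λ η η' ∧ ∀ y, Bootstrap I U Λ η y → η' y ∈ I y := by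
  let healthy (ζ : Config S) := Λ.filter fun y => ζ y ∉ I y
  obtain ⟨ζ, ⟨hreach, hkeep⟩, hmin⟩ := (measure fun ζ => (healthy ζ).card).wf.has_min
    {ζ | Reach I U Λ η ζ ∧ ∀ y, η y ∈ I y → ζ y ∈ I y} ⟨η, .refl, fun _ => id⟩
  refine ⟨ζ, hreach, fun y hy => ?_⟩
  induction hy with
  | base hy => exact hkeep _ hy
  | @step y hyΛ u hu _ ih =>
    by_contra hζy
    obtain ⟨s, hs⟩ := hI y
    set ζ' := Function.update ζ y s
    have hstep : Step I U Λ ζ ζ' :=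
      ⟨y, hyΛ, ⟨u, hu, ih⟩, fun z hz => Function.update_of_ne hz s ζ⟩
    have hhealthy : healthy ζ' = (healthy ζ).erase y := by
      ext z
      by_cases hzy : z = y
      · subst hzy
        simp [healthy, ζ', hs]
      · simp [healthy, ζ', hzy]
    refine hmin ζ' ⟨hreach.tail (.inl hstep), fun z hz => ?_⟩ ?_
    · by_cases hzy : z = y
      · subst hzy
        simpa [ζ'] using hs
      · simpa [ζ', Function.update_of_ne hzy] using hkeep z hz
    · show (healthy ζ').card < (healthy ζ).card
      rw [hhealthy]
      exact Finset.card_erase_lt_of_mem (Finset.mem_filter.2 ⟨hyΛ, hζy⟩)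

theorem exists_bootstrap_of_mem_closure (hU : ∀ x ∈ Λ, ∀ u ∈ U x, x ∉ u) {z : ℤ}
    (h : z ∈ closure I U Λ η) : z ∈ Λ ∧ ∃ u ∈ U z, ∀ y ∈ u, Bootstrap I U Λ η y := by
  obtain ⟨hz, η', hr, u, hu, hinf⟩ := h
  rw [bootstrap_eq_of_reach hU hr]
  exact ⟨hz, u, hu, fun y hy => .base (hinf y hy)⟩

theorem mem_closure_of_bootstrap (hI : ∀ y, (I y).Nonempty) {z : ℤ} (hz : z ∈ Λ)
    {u : Finset ℤ} (hu : u ∈ U z) (h : ∀ y ∈ u, Bootstrap I U Λ η y) :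
    z ∈ closure I U Λ η := by
  obtain ⟨η', hr, hinf⟩ := exists_reach_infected_of_bootstrap (U := U) (Λ := Λ) hI η
  exact ⟨hz, η', hr, u, hu, fun y hy => hinf y (h y hy)⟩

theorem bootstrap_iff (hU : ∀ x ∈ Λ, ∀ u ∈ U x, x ∉ u) (hI : ∀ y, (I y).Nonempty) {z : ℤ} :
    Bootstrap I U Λ η z ↔ η z ∈ I z ∨ z ∈ closure I U Λ η := by
  constructor
  · rintro (h | ⟨hz, u, hu, h⟩)
    exacts [.inl h, .inr (mem_closure_of_bootstrap hI hz hu h)]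
  · rintro (h | h)
    · exact .base h
    · obtain ⟨hz, u, hu, h⟩ := exists_bootstrap_of_mem_closure hU h
      exact .step hz u hu h

end Bootstrap

section Walls

variable {S : ℤ → Type} {I : ∀ x : ℤ, Set (S x)} {U : ℤ → Finset (Finset ℤ)}
  {Λ Λ' Λ₁ Λ₂ : Finset ℤ} {η η' ζ : Config S} {r a b : ℤ}

theorem Bootstrap.of_left_of_wall (hr : ∀ y ∈ Λ, ∀ u ∈ U y, ∀ w ∈ u, |w - y| ≤ r)
    (hΛ : ∀ y ∈ Λ, y < a → y ∈ Λ')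
    (hbase : ∀ y < a, η y ∈ I y → Bootstrap I U Λ' η' y)
    (hwall : ∀ w, a ≤ w → w < a + r → Bootstrap I U Λ η w → Bootstrap I U Λ' η' w)
    {z : ℤ} (hz : Bootstrap I U Λ η z) (hza : z < a) : Bootstrap I U Λ' η' z := by
  induction hz with
  | base hy => exact hbase _ hza hy
  | @step y hy u hu hb ih =>
    refine .step (hΛ y hy hza) u hu fun w hw => ?_
    have := abs_le.1 (hr y hy u hu w hw)
    by_cases hwa : w < a
    · exact ih w hw hwa
    · exact hwall w (by omega) (by omega) (hb w hw)

theorem Bootstrap.of_right_of_wall (hr : ∀ y ∈ Λ, ∀ u ∈ U y, ∀ w ∈ u, |w - y| ≤ r)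
    (hΛ : ∀ y ∈ Λ, a < y → y ∈ Λ')
    (hbase : ∀ y, a < y → η y ∈ I y → Bootstrap I U Λ' η' y)
    (hwall : ∀ w, a - r < w → w ≤ a → Bootstrap I U Λ η w → Bootstrap I U Λ' η' w)
    {z : ℤ} (hz : Bootstrap I U Λ η z) (hza : a < z) : Bootstrap I U Λ' η' z := by
  induction hz with
  | base hy => exact hbase _ hza hy
  | @step y hy u hu hb ih =>
    refine .step (hΛ y hy hza) u hu fun w hw => ?_
    have := abs_le.1 (hr y hy u hu w hw)
    by_cases hwa : a < w
    · exact ih w hw hwa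
    · exact hwall w (by omega) (by omega) (hb w hw)

/-- Neither half holds on its own: a site just left of the wall at `b` may need the `Λ₂`-half to
its right, and symmetrically at `a`. -/
theorem Bootstrap.between_walls (hr : ∀ y ∈ Λ, ∀ u ∈ U y, ∀ w ∈ u, |w - y| ≤ r) (hab : a < b)
    (hΛ₁ : ∀ y ∈ Λ, y < b → y ∈ Λ₁) (hΛ₂ : ∀ y ∈ Λ, a < y → y ∈ Λ₂)
    (hwall₁ : ∀ w, b ≤ w → w < b + r → Bootstrap I U Λ₂ η w → Bootstrap I U Λ₁ η w)
    (hwall₂ : ∀ w, a - r < w → w ≤ a → Bootstrap I U Λ₁ η w → Bootstrap I U Λ₂ η w)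
    {z : ℤ} (hz : Bootstrap I U Λ η z) :
    (z < b → Bootstrap I U Λ₁ η z) ∧ (a < z → Bootstrap I U Λ₂ η z) := by
  induction hz with
  | base hy => exact ⟨fun _ => .base hy, fun _ => .base hy⟩
  | @step y hy u hu _ ih =>
    refine ⟨fun hyb => .step (hΛ₁ y hy hyb) u hu fun w hw => ?_,
      fun hay => .step (hΛ₂ y hy hay) u hu fun w hw => ?_⟩
    all_goals have := abs_le.1 (hr y hy u hu w hw)
    · by_cases hwb : w < b
      · exact (ih w hw).1 hwb
      · exact hwall₁ w (by omega) (by omega) ((ih w hw).2 (by omega))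
    · by_cases haw : a < w
      · exact (ih w hw).2 haw
      · exact hwall₂ w (by omega) (by omega) ((ih w hw).1 (by omega))

theorem mem_closure_of_bootstrap_near (hU : ∀ x ∈ Λ, ∀ u ∈ U x, x ∉ u)
    (hI : ∀ y, (I y).Nonempty) (hr : ∀ y ∈ Λ, ∀ u ∈ U y, ∀ w ∈ u, |w - y| ≤ r) {m : ℤ}
    (hm : m ∈ closure I U Λ η) (hmΛ' : m ∈ Λ')
    (h : ∀ w, |w - m| ≤ r → Bootstrap I U Λ η w → Bootstrap I U Λ' η' w) :
    m ∈ closure I U Λ' η' := by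
  obtain ⟨hmΛ, u, hu, hb⟩ := exists_bootstrap_of_mem_closure hU hm
  exact mem_closure_of_bootstrap hI hmΛ' hu fun w hw => h w (hr m hmΛ u hu w hw) (hb w hw)

theorem mem_closure_right_of_block (hU : ∀ x ∈ Λ, ∀ u ∈ U x, x ∉ u)
    (hI : ∀ y, (I y).Nonempty) (hr : ∀ y ∈ Λ, ∀ u ∈ U y, ∀ w ∈ u, |w - y| ≤ r)
    (hΛ : ∀ y ∈ Λ, a < y → y ∈ Λ')
    (hblock : ∀ y ∈ Finset.Icc (a - r) (a + r), y ∈ closure I U Λ ζ → ζ y ∈ I y)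
    {m : ℤ} (hm : a + r < m) (hmΛ' : m ∈ Λ') (hcl : m ∈ closure I U Λ ζ) :
    m ∈ closure I U Λ' ζ := by
  refine mem_closure_of_bootstrap_near hU hI hr hcl hmΛ' fun w hw h => ?_
  refine h.of_right_of_wall hr hΛ (fun _ _ => .base) (fun y hy₁ hy₂ hy => .base ?_)
    (by have := abs_le.1 hw; omega)
  exact ((bootstrap_iff hU hI).1 hy).elim id (hblock y (Finset.mem_Icc.2 ⟨by omega, by omega⟩))

theorem mem_closure_left_of_block (hU : ∀ x ∈ Λ, ∀ u ∈ U x, x ∉ u)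
    (hI : ∀ y, (I y).Nonempty) (hr : ∀ y ∈ Λ, ∀ u ∈ U y, ∀ w ∈ u, |w - y| ≤ r)
    (hΛ : ∀ y ∈ Λ, y < a → y ∈ Λ')
    (hblock : ∀ y ∈ Finset.Icc (a - r) (a + r), y ∈ closure I U Λ ζ → ζ y ∈ I y)
    {m : ℤ} (hm : m < a - r) (hmΛ' : m ∈ Λ') (hcl : m ∈ closure I U Λ ζ) :
    m ∈ closure I U Λ' ζ := by
  refine mem_closure_of_bootstrap_near hU hI hr hcl hmΛ' fun w hw h => ?_
  refine h.of_left_of_wall hr hΛ (fun _ _ => .base) (fun y hy₁ hy₂ hy => .base ?_)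
    (by have := abs_le.1 hw; omega)
  exact ((bootstrap_iff hU hI).1 hy).elim id (hblock y (Finset.mem_Icc.2 ⟨by omega, by omega⟩))

end Walls

section Stalled

variable {S : ℤ → Type} {I : ∀ x : ℤ, Set (S x)} {U : ℤ → Finset (Finset ℤ)}
  {Λ₁ Λ₂ : Finset ℤ} {θ θ' : Config S} {r a : ℤ}

/-- A window `[a, a + r)` gaining no `Λ₁`-closure site from `θ` to `θ'` shields the sites left
of it from the moves made in `Λ₂`. -/
theorem Bootstrap.left_of_stalled_window (hU₁ : ∀ x ∈ Λ₁, ∀ u ∈ U x, x ∉ u)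
    (hU₂ : ∀ x ∈ Λ₂, ∀ u ∈ U x, x ∉ u) (hI : ∀ y, (I y).Nonempty)
    (hr₁ : ∀ y ∈ Λ₁, ∀ u ∈ U y, ∀ w ∈ u, |w - y| ≤ r)
    (hr₂ : ∀ y ∈ Λ₂, ∀ u ∈ U y, ∀ w ∈ u, |w - y| ≤ r)
    (hΛ : ∀ y ∈ Λ₂, y < a → y ∈ Λ₁) (hθ' : Reach I U Λ₂ θ θ')
    (h₂₁ : ∀ m, a ≤ m → m < a + r → m ∈ closure I U Λ₂ θ → m ∈ closure I U Λ₁ θ)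
    (hstall : ∀ m, a ≤ m → m < a + r → m ∈ closure I U Λ₁ θ' → m ∈ closure I U Λ₁ θ)
    {z : ℤ} (hz : Bootstrap I U Λ₁ θ' z) (hza : z < a) : Bootstrap I U Λ₁ θ z := by
  have hwall₂ (w : ℤ) (h₁ : a ≤ w) (h₂ : w < a + r) (hw : Bootstrap I U Λ₂ θ w) :
      Bootstrap I U Λ₁ θ w := by
    rcases (bootstrap_iff hU₂ hI).1 hw with hw | hw
    exacts [.base hw, (bootstrap_iff hU₁ hI).2 (.inr (h₂₁ w h₁ h₂ hw))]
  have hinfected (y : ℤ) (hy : θ' y ∈ I y) : Bootstrap I U Λ₂ θ y := by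
    rw [bootstrap_eq_of_reach hU₂ hθ']
    exact .base hy
  refine hz.of_left_of_wall hr₁ (fun y hy _ => hy)
    (fun y hya hy => (hinfected y hy).of_left_of_wall hr₂ hΛ (fun _ _ => .base) hwall₂ hya)
    (fun w h₁ h₂ hw => ?_) hza
  rcases (bootstrap_iff hU₁ hI).1 hw with hw | hw
  exacts [hwall₂ w h₁ h₂ (hinfected w hw), (bootstrap_iff hU₁ hI).2 (.inr (hstall w h₁ h₂ hw))]

open Finset in
theorem mem_closure_of_stalled {n ℓ l₂ c x x' : ℤ} {R : ℕ}
    (hU : ∀ y ∈ Icc 1 n, ∀ u ∈ U y, y ∉ u) (hI : ∀ y, (I y).Nonempty)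
    (hR : ∀ y ∈ Icc 1 n, ∀ u ∈ U y, ∀ w ∈ u, |w - y| ≤ R)
    (hℓn : ℓ ≤ n) (hl₂ : 1 ≤ l₂) (hcℓ : c + R ≤ ℓ) (hl₂x : l₂ ≤ x - R) (hxc : x + R < c - R)
    (hcx' : c + R < x' - R) (hx'ℓ : x' + R ≤ ℓ)
    (hθ' : Reach I U (Icc l₂ n) θ θ') (hfull : closure I U (Icc 1 n) θ' = Icc 1 n)
    (hB : ∀ y ∈ Icc (x - R) (x + R), y ∈ closure I U (Icc 1 ℓ) θ → θ y ∈ I y)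
    (hB' : ∀ y ∈ Icc (x' - R) (x' + R), y ∈ closure I U (Icc l₂ n) θ' → θ' y ∈ I y)
    (h₂₁ : ∀ m ∈ Icc (c - R) (c + R),
      m ∈ closure I U (Icc l₂ n) θ' → m ∈ closure I U (Icc 1 ℓ) θ')
    (hstall : ∀ m ∈ Icc (c - R) (c + R),
      m ∈ closure I U (Icc 1 ℓ) θ' → m ∈ closure I U (Icc 1 ℓ) θ)
    {m : ℤ} (hm : m ∈ Icc (c - R) (c + R)) : m ∈ closure I U (Icc 1 ℓ) θ' := by
  have hL₁ : Icc 1 ℓ ⊆ Icc 1 n := Icc_subset_Icc le_rfl hℓn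
  have hL₂ : Icc l₂ n ⊆ Icc 1 n := Icc_subset_Icc hl₂ le_rfl
  have hU₁ y (hy : y ∈ Icc 1 ℓ) := hU y (hL₁ hy)
  have hU₂ y (hy : y ∈ Icc l₂ n) := hU y (hL₂ hy)
  have hR₁ y (hy : y ∈ Icc 1 ℓ) := hR y (hL₁ hy)
  have hR₂ y (hy : y ∈ Icc l₂ n) := hR y (hL₂ hy)
  have hwindow {m : ℤ} (h₁ : c - R ≤ m) (h₂ : m < c - R + R) : m ∈ Icc (c - R) (c + R) :=
    mem_Icc.2 ⟨h₁, by omega⟩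
  have hleft {z : ℤ} (hz : Bootstrap I U (Icc 1 ℓ) θ' z) (hzc : z < c - R) :
      Bootstrap I U (Icc 1 ℓ) θ z := by
    refine hz.left_of_stalled_window hU₁ hU₂ hI hR₁ hR₂
      (fun y hy hyc => by simp only [mem_Icc] at hy ⊢; omega) hθ'
      (fun w h₁ h₂ hw => hstall w (hwindow h₁ h₂) (h₂₁ w (hwindow h₁ h₂) ?_))
      (fun w h₁ h₂ hw => hstall w (hwindow h₁ h₂) hw) hzc
    rwa [← closure_eq_of_reach hθ']
  have hwall₂ (w : ℤ) (h₁ : x - R < w) (h₂ : w ≤ x) (hw : Bootstrap I U (Icc 1 ℓ) θ' w) :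
      Bootstrap I U (Icc l₂ n) θ' w := by
    have hθw := ((bootstrap_iff hU₁ hI).1 (hleft hw (by omega))).elim id
      (hB w (mem_Icc.2 ⟨by omega, by omega⟩))
    rw [← bootstrap_eq_of_reach hU₂ hθ']
    exact .base hθw
  have hwall₁ (w : ℤ) (h₁ : x' ≤ w) (h₂ : w < x' + R)
      (hw : Bootstrap I U (Icc l₂ n) θ' w) : Bootstrap I U (Icc 1 ℓ) θ' w :=
    .base (((bootstrap_iff hU₂ hI).1 hw).elim id (hB' w (mem_Icc.2 ⟨by omega, by omega⟩)))
  have hmcl : m ∈ closure I U (Icc 1 n) θ' := by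
    rw [hfull, coe_Icc]
    simp only [mem_Icc, Set.mem_Icc] at hm ⊢
    omega
  refine mem_closure_of_bootstrap_near hU hI hR hmcl
    (by simp only [mem_Icc] at hm ⊢; omega) fun w hw h => ?_
  refine (h.between_walls hR (by omega) ?_ ?_ hwall₁ hwall₂).1 ?_
  all_goals simp only [mem_Icc, abs_le] at *; omega

end Stalled

open Finset in
theorem statement10_general (S : ℤ → Type) [∀ x, Fintype (S x)] (n ℓ Δ : ℤ)
    (q : ℝ) (R : ℕ)
    (hq0 : 0 < q)
    (π : ∀ x : ℤ, S x → ℝ) (I : ∀ x : ℤ, Set (S x)) (U : ℤ → Finset (Finset ℤ))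
    (hπI : ∀ x : ℤ, q ≤ ∑ s : S x, if s ∈ I x then π x s else 0)
    (hUx : ∀ x ∈ Finset.Icc (1 : ℤ) n, ∀ u ∈ U x, x ∉ u)
    (hUR : ∀ x ∈ Finset.Icc (1 : ℤ) n, ∀ u ∈ U x, ∀ y ∈ u, |y - x| ≤ (R : ℤ))
    (hℓn : ℓ ≤ n) (hΔℓ : Δ ≤ ℓ)
    (hM : Finset.Icc (ℓ - Δ / 2 - (R : ℤ)) (ℓ - Δ / 2 + (R : ℤ)) ⊆
      Finset.Icc (1 : ℤ) ℓ ∩ Finset.Icc (ℓ - Δ + 1) n)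
    (η : Config S) (hη : closure I U (Finset.Icc (1 : ℤ) n) η = ↑(Finset.Icc (1 : ℤ) n))
    (θ : Config S) (hθ : Reach I U (Finset.Icc (1 : ℤ) ℓ) η θ)
    (x : ℤ)
    (hB : Finset.Icc (x - (R : ℤ)) (x + (R : ℤ)) ⊆
      Finset.Icc (1 : ℤ) ℓ ∩ Finset.Icc (ℓ - Δ + 1) n)
    (hxM : x + (R : ℤ) < ℓ - Δ / 2 - (R : ℤ))
    (hBinf : ∀ y ∈ Finset.Icc (x - (R : ℤ)) (x + (R : ℤ)),
      y ∈ closure I U (Finset.Icc (1 : ℤ) ℓ) θ → θ y ∈ I y)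
    (θ' : Config S) (hθ' : Reach I U (Finset.Icc (ℓ - Δ + 1) n) θ θ')
    (x' : ℤ)
    (hB' : Finset.Icc (x' - (R : ℤ)) (x' + (R : ℤ)) ⊆
      Finset.Icc (1 : ℤ) ℓ ∩ Finset.Icc (ℓ - Δ + 1) n)
    (hx'M : ℓ - Δ / 2 + (R : ℤ) < x' - (R : ℤ))
    (hB'inf : ∀ y ∈ Finset.Icc (x' - (R : ℤ)) (x' + (R : ℤ)),
      y ∈ closure I U (Finset.Icc (ℓ - Δ + 1) n) θ' → θ' y ∈ I y) :
    min (((Finset.Icc (ℓ - Δ / 2 - (R : ℤ)) (ℓ - Δ / 2 + (R : ℤ))).filter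
          (fun y => y ∈ closure I U (Finset.Icc (1 : ℤ) ℓ) η)).card + 1) (2 * R + 1) ≤
      ((Finset.Icc (ℓ - Δ / 2 - (R : ℤ)) (ℓ - Δ / 2 + (R : ℤ))).filter
          (fun y => y ∈ closure I U (Finset.Icc (1 : ℤ) ℓ) θ')).card := by
  set M := Icc (ℓ - Δ / 2 - R) (ℓ - Δ / 2 + R)
  have hI y : (I y).Nonempty := Set.nonempty_of_le_sum_ite hq0 (hπI y)
  obtain ⟨-, hcℓ, -, -⟩ := bounds_of_Icc_subset_Icc_inter_Icc hM (by omega)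
  obtain ⟨-, -, hl₂x, -⟩ := bounds_of_Icc_subset_Icc_inter_Icc hB (by omega)
  obtain ⟨-, hx'ℓ, -, -⟩ := bounds_of_Icc_subset_Icc_inter_Icc hB' (by omega)
  have hL₁ : Icc 1 ℓ ⊆ Icc 1 n := Icc_subset_Icc le_rfl hℓn
  have hL₂ : Icc (ℓ - Δ + 1) n ⊆ Icc 1 n := Icc_subset_Icc (by omega) le_rfl
  have h₁₂ : ∀ m ∈ M, m ∈ closure I U (Icc 1 ℓ) θ → m ∈ closure I U (Icc (ℓ - Δ + 1) n) θ :=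
    fun m hm => mem_closure_right_of_block (fun y hy => hUx y (hL₁ hy)) hI
      (fun y hy => hUR y (hL₁ hy)) (fun y hy hxy => by simp only [mem_Icc] at hy ⊢; omega)
      hBinf (by simp only [M, mem_Icc] at hm; omega) (hM hm |> mem_inter.1).2
  have h₂₁ : ∀ m ∈ M, m ∈ closure I U (Icc (ℓ - Δ + 1) n) θ' → m ∈ closure I U (Icc 1 ℓ) θ' :=
    fun m hm => mem_closure_left_of_block (fun y hy => hUx y (hL₂ hy)) hI
      (fun y hy => hUR y (hL₂ hy)) (fun y hy hyx => by simp only [mem_Icc] at hy ⊢; omega)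
      hB'inf (by simp only [M, mem_Icc] at hm; omega) (hM hm |> mem_inter.1).1
  have hfull : closure I U (Icc 1 n) θ' = Icc 1 n :=
    (closure_eq_of_reach ((hθ.mono hL₁).trans (hθ'.mono hL₂))).symm.trans hη
  have hcard : M.card = 2 * R + 1 := by simp only [M, Int.card_Icc]; omega
  rw [closure_eq_of_reach hθ, ← hcard]
  refine min_card_add_one_le_card (fun m hm => ?_) fun hstall m hm => ?_
  · simp only [mem_filter] at hm ⊢
    exact ⟨hm.1, h₂₁ m hm.1 (closure_eq_of_reach hθ' ▸ h₁₂ m hm.1 hm.2)⟩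
  · refine mem_filter.2 ⟨hm, mem_closure_of_stalled hUx hI hUR hℓn (by omega) hcℓ hl₂x hxM
      hx'M hx'ℓ hθ' hfull hBinf hB'inf h₂₁ (fun m hm hcl => ?_) hm⟩
    exact (mem_filter.1 (hstall (mem_filter.2 ⟨hm, hcl⟩))).2

/-- Two-step increase of the closure restricted to the middle
block `M = {ℓ-⌊Δ/2⌋-R,…,ℓ-⌊Δ/2⌋+R}` after an update in `L₁` leaving an
infected block left of `M` and an update in `L₂` leaving an infected block
right of `M`. -/
theorem statement10 (S : ℤ → Type) [∀ x, Fintype (S x)] (n ℓ Δ : ℤ)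
    (q : ℝ) (R : ℕ)
    (hq0 : 0 < q) (hq1 : q ≤ 1) (hR : 1 ≤ R)
    (π : ∀ x : ℤ, S x → ℝ) (I : ∀ x : ℤ, Set (S x)) (U : ℤ → Finset (Finset ℤ))
    (hπpos : ∀ (x : ℤ) (s : S x), 0 < π x s)
    (hπsum : ∀ x : ℤ, ∑ s : S x, π x s = 1)
    (hπI : ∀ x : ℤ, q ≤ ∑ s : S x, if s ∈ I x then π x s else 0)
    (hUx : ∀ x ∈ Finset.Icc (1 : ℤ) n, ∀ u ∈ U x, x ∉ u)
    (hUR : ∀ x ∈ Finset.Icc (1 : ℤ) n, ∀ u ∈ U x, ∀ y ∈ u, |y - x| ≤ (R : ℤ))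
    (hUL : ∀ x ∈ Finset.Icc (1 : ℤ) n, ∀ u ∈ U x, u ⊆ Finset.Icc (1 : ℤ) n)
    (hℓ1 : 1 ≤ ℓ) (hℓn : ℓ ≤ n) (hΔ0 : 0 ≤ Δ) (hΔℓ : Δ ≤ ℓ)
    (hM : Finset.Icc (ℓ - Δ / 2 - (R : ℤ)) (ℓ - Δ / 2 + (R : ℤ)) ⊆
      Finset.Icc (1 : ℤ) ℓ ∩ Finset.Icc (ℓ - Δ + 1) n)
    (η : Config S) (hη : closure I U (Finset.Icc (1 : ℤ) n) η = ↑(Finset.Icc (1 : ℤ) n))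
    (θ : Config S) (hθ : Reach I U (Finset.Icc (1 : ℤ) ℓ) η θ)
    (x : ℤ)
    (hB : Finset.Icc (x - (R : ℤ)) (x + (R : ℤ)) ⊆
      Finset.Icc (1 : ℤ) ℓ ∩ Finset.Icc (ℓ - Δ + 1) n)
    (hxM : x + (R : ℤ) < ℓ - Δ / 2 - (R : ℤ))
    (hBinf : ∀ y ∈ Finset.Icc (x - (R : ℤ)) (x + (R : ℤ)),
      y ∈ closure I U (Finset.Icc (1 : ℤ) ℓ) θ → θ y ∈ I y)
    (θ' : Config S) (hθ' : Reach I U (Finset.Icc (ℓ - Δ + 1) n) θ θ')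
    (x' : ℤ)
    (hB' : Finset.Icc (x' - (R : ℤ)) (x' + (R : ℤ)) ⊆
      Finset.Icc (1 : ℤ) ℓ ∩ Finset.Icc (ℓ - Δ + 1) n)
    (hx'M : ℓ - Δ / 2 + (R : ℤ) < x' - (R : ℤ))
    (hB'inf : ∀ y ∈ Finset.Icc (x' - (R : ℤ)) (x' + (R : ℤ)),
      y ∈ closure I U (Finset.Icc (ℓ - Δ + 1) n) θ' → θ' y ∈ I y) :
    min (((Finset.Icc (ℓ - Δ / 2 - (R : ℤ)) (ℓ - Δ / 2 + (R : ℤ))).filter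
          (fun y => y ∈ closure I U (Finset.Icc (1 : ℤ) ℓ) η)).card + 1) (2 * R + 1) ≤
      ((Finset.Icc (ℓ - Δ / 2 - (R : ℤ)) (ℓ - Δ / 2 + (R : ℤ))).filter
          (fun y => y ∈ closure I U (Finset.Icc (1 : ℤ) ℓ) θ')).card :=
  statement10_general S n ℓ Δ q R hq0 π I U hπI hUx hUR hℓn hΔℓ hM η hη θ hθ x hB hxM hBinf θ' hθ'
    x' hB' hx'M hB'inf

end KCM
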